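/- Inversion for abstractions: if Γ ⊢ λx.M : A, then there is a finite index set I and types B_i, C_i for i ∈ I such that ⋂_{i∈I}(B_i → C_i) ≤_𝒯 A and Γ, x:B_i ⊢ M : C_i for all i ∈ I. -/
import Mathlib


/-- Pure λ-terms with variables named by natural numbers. -/
inductive Tm : Type
  | var : ℕ → Tm
  | lam : ℕ → Tm → Tm
  | app : Tm → Tm → Tm
deriving DecidableEq

namespace Tm

/-- Free variables of a term. -/
def fv : Tm → Finset ℕ
  | var x => {x}
  | lam x t => fv t \ {x}
  | app t u => fv t ∪ fv u

/-- A variable fresh for a given finite set of variables. -/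
def fresh (s : Finset ℕ) : ℕ := (s.sup id) + 1

/-- Capture-avoiding simultaneous substitution. -/
def subst (σ : ℕ → Tm) : Tm → Tm
  | var x => σ x
  | app t u => app (subst σ t) (subst σ u)
  | lam x t =>
      let y := fresh ((fv t \ {x}).biUnion fun z => fv (σ z))
      lam y (subst (fun z => if z = x then var y else σ z) t)

/-- `M[x := N]`. -/
def subst1 (x : ℕ) (N M : Tm) : Tm :=
  subst (fun z => if z = x then N else var z) M

/-- `λx₁…xₙ. t`. -/
def lams (xs : List ℕ) (t : Tm) : Tm := xs.foldr lam t

/-- `t M₁ ⋯ Mₘ`. -/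
def apps (t : Tm) (ts : List Tm) : Tm := ts.foldl app t

/-- One-step β-reduction: contextual closure of the β-rule. -/
inductive Step : Tm → Tm → Prop
  | beta (x : ℕ) (M N : Tm) : Step (app (lam x M) N) (subst1 x N M)
  | appL {M M' : Tm} (N : Tm) : Step M M' → Step (app M N) (app M' N)
  | appR (M : Tm) {N N' : Tm} : Step N N' → Step (app M N) (app M N')
  | abs (x : ℕ) {M M' : Tm} : Step M M' → Step (lam x M) (lam x M')

/-- β-reduction: reflexive-transitive closure of one-step β-reduction. -/
def Red : Tm → Tm → Prop := Relation.ReflTransGen Step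

/-- β-convertibility: the equivalence relation generated by β-reduction. -/
def Conv : Tm → Tm → Prop := Relation.EqvGen Step

/-- `M` is solvable if `(λx⃗.M) N₁ ⋯ Nₙ` β-reduces to the identity,
where `x⃗` covers the free variables of `M`. -/
def Solvable (M : Tm) : Prop :=
  ∃ (xs : List ℕ) (Ns : List Tm) (y : ℕ),
    M.fv ⊆ xs.toFinset ∧ Red (apps (lams xs M) Ns) (lam y (var y))

/-- One-step head reduction: contraction of the head redex. -/
inductive HeadStep : Tm → Tm → Prop
  | beta (x : ℕ) (M N : Tm) (Ms : List Tm) :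
      HeadStep (apps (app (lam x M) N) Ms) (apps (subst1 x N M) Ms)
  | abs (x : ℕ) {M M' : Tm} : HeadStep M M' → HeadStep (lam x M) (lam x M')

end Tm

/-- Intersection types over a set `A` of constants, with top `𝖴`. -/
inductive Ty (A : Type) : Type
  | const : A → Ty A
  | top : Ty A
  | arrow : Ty A → Ty A → Ty A
  | inter : Ty A → Ty A → Ty A
deriving DecidableEq

/-- An intersection type theory: a subtyping relation on `Ty A` closed under
(Refl), (IncL), (IncR), (𝖴top), (Glb), (Trans) and (→∼). -/
structure ITT (A : Type) where
  le : Ty A → Ty A → Prop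
  le_refl : ∀ a, le a a
  le_incL : ∀ a b, le (Ty.inter b a) b
  le_incR : ∀ a b, le (Ty.inter b a) a
  le_top : ∀ a, le a Ty.top
  le_glb : ∀ {a b c}, le c a → le c b → le c (Ty.inter a b)
  le_trans : ∀ {a b c}, le a b → le b c → le a c
  arrow_cong : ∀ {a a' b b'}, le a a' → le a' a → le b b' → le b' b →
      le (Ty.arrow a b) (Ty.arrow a' b')

variable {A : Type}

/-- The equivalence `∼` induced by the subtyping. -/
def ITT.eqv (T : ITT A) (a b : Ty A) : Prop := T.le a b ∧ T.le b a

/-- Bases: (partial) mappings from term variables to types. -/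
def Ctx (A : Type) := ℕ → Option (Ty A)

def Ctx.empty : Ctx A := fun _ => none

/-- `Γ, x:a`. -/
def Ctx.update (Γ : Ctx A) (x : ℕ) (a : Ty A) : Ctx A :=
  fun y => if y = x then some a else Γ y

/-- The intersection type assignment system induced by an itt `T`:
rules (Ax), (𝖴), (→I), (→E), (∩I) and (≤). -/
inductive Der (T : ITT A) : Ctx A → Tm → Ty A → Prop
  | ax {Γ : Ctx A} {x a} : Γ x = some a → Der T Γ (Tm.var x) a
  | top {Γ M} : Der T Γ M Ty.top
  | arrI {Γ : Ctx A} {x M a b} :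
      Der T (Γ.update x b) M a → Der T Γ (Tm.lam x M) (Ty.arrow b a)
  | arrE {Γ M N a b} :
      Der T Γ M (Ty.arrow b a) → Der T Γ N b → Der T Γ (Tm.app M N) a
  | interI {Γ M a b} : Der T Γ M a → Der T Γ M b → Der T Γ M (Ty.inter a b)
  | sub {Γ M a b} : Der T Γ M a → T.le a b → Der T Γ M b

/-- Finite intersection `⋂_{i∈I} Aᵢ`, with `⋂_∅ = 𝖴`. -/
def interList : List (Ty A) → Ty A
  | [] => Ty.top
  | a :: l => Ty.inter a (interList l)

theorem interList_append_le_left {A : Type} (T : ITT A) (l1 l2 : List (Ty A)) :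
    T.le (interList (l1 ++ l2)) (interList l1) := by
  induction l1 with
  | nil => exact T.le_top _
  | cons a l ih =>
    exact T.le_glb (T.le_incL _ _) (T.le_trans (T.le_incR _ _) ih)

theorem interList_append_le_right {A : Type} (T : ITT A) (l1 l2 : List (Ty A)) :
    T.le (interList (l1 ++ l2)) (interList l2) := by
  induction l1 with
  | nil => exact T.le_refl _
  | cons a l ih => exact T.le_trans (T.le_incR _ _) ih

/-- Inversion for abstractions: if `Γ ⊢ λx.M : A`, then there
are finitely many `Bᵢ, Cᵢ` with `⋂ᵢ (Bᵢ → Cᵢ) ≤_𝒯 A` and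
`Γ, x:Bᵢ ⊢ M : Cᵢ` for each `i`. -/
theorem inversion_lam {A : Type} (T : ITT A) (Γ : Ctx A) (x : ℕ) (M : Tm)
    (a : Ty A) (h : Der T Γ (Tm.lam x M) a) :
    ∃ l : List (Ty A × Ty A),
      T.le (interList (l.map fun p => Ty.arrow p.1 p.2)) a ∧
      ∀ p ∈ l, Der T (Γ.update x p.1) M p.2 := by
  generalize hM : Tm.lam x M = L at h
  induction h with
  | ax _ => cases hM
  | top => exact ⟨[], T.le_top _, by simp⟩
  | arrI hd ih =>
    cases hM
    exact ⟨[(_, _)], T.le_incL _ _, by simpa using hd⟩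
  | arrE _ _ _ _ => cases hM
  | interI h1 h2 ih1 ih2 =>
    obtain ⟨l1, hle1, hd1⟩ := ih1 hM
    obtain ⟨l2, hle2, hd2⟩ := ih2 hM
    refine ⟨l1 ++ l2, ?_, ?_⟩
    · rw [List.map_append]
      exact T.le_glb (T.le_trans (interList_append_le_left T _ _) hle1)
        (T.le_trans (interList_append_le_right T _ _) hle2)
    · intro p hp
      rcases List.mem_append.1 hp with h | h
      · exact hd1 p h
      · exact hd2 p h
  | sub h1 hle ih =>
    obtain ⟨l, hle', hd⟩ := ih hM
    exact ⟨l, T.le_trans hle' hle, hd⟩
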